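/- Let V be a finite nonempty type with |V| ≤ n, α a linearly ordered type, and p, k natural numbers with 1 ≤ p ≤ k and n ≥ k + 1. Let G : ℕ → SimpleGraph V be a sequence of simple graphs on V, each having at most p connected components, and let m : ℕ → V → α satisfy m(t+1) = step(G(t), m(t)) for all t. Then for every natural number t with t · (k + 1 − p) > k(n − k − 1), the image of m(t) contains at most k distinct values. -/

import Mathlib

/-!
Track the potential `Phi k m = ∑ v, (k - rk m v)`. Min-updates never raise a rank, so for each
threshold `j < k` the set of vertices of rank `≤ j` only grows; moreover every connected component
with vertices on both sides of the threshold has an edge across it, whose outer endpoint drops to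
rank `≤ j` in the next round. While `k + 1` values survive, the ranks `0, …, k` are spread over at
most `p` components, which forces at least `k + 1 - p` such (threshold, component) pairs, so `Phi`
grows by at least `k + 1 - p` per round. On the other hand, with `k + 1` values present, `Phi` is
confined to a window of width `k (n - k - 1)`.
-/

open Finset in
/-- The rank of a vertex `v` under value assignment `m`: the number of distinct
values in the image of `m` that are strictly smaller than `m v`. -/
def rk {V α : Type*} [Fintype V] [LinearOrder α] (m : V → α) (v : V) : ℕ :=
  ((univ.image m).filter (· < m v)).card

open scoped Classical in
/-- One min-update step: each vertex takes the minimum of `m` over its closed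
neighborhood `{v} ∪ {u : G.Adj u v}`. -/
noncomputable def step {V α : Type*} [Fintype V] [LinearOrder α]
    (G : SimpleGraph V) (m : V → α) (v : V) : α :=
  (insert v (Finset.univ.filter (fun u => G.Adj u v))).inf'
    (Finset.insert_nonempty _ _) m

/-- The potential function `Φ_k(m) = Σ_v (k - r_m(v))` (truncated subtraction). -/
def Phi {V α : Type*} [Fintype V] [LinearOrder α] (k : ℕ) (m : V → α) : ℕ :=
  ∑ v, (k - rk m v)

open Finset

section Step

variable {V α : Type*} [Fintype V] [LinearOrder α]

theorem step_le_self (G : SimpleGraph V) (m : V → α) (v : V) : step G m v ≤ m v := by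
  classical
  exact inf'_le _ (mem_insert_self _ _)

theorem step_le_of_adj (G : SimpleGraph V) (m : V → α) {u v : V} (h : G.Adj u v) :
    step G m v ≤ m u := by
  classical
  exact inf'_le _ (mem_insert_of_mem (mem_filter.2 ⟨mem_univ u, h⟩))

theorem image_step_subset (G : SimpleGraph V) (m : V → α) :
    univ.image (step G m) ⊆ univ.image m := by
  classical
  intro x hx
  obtain ⟨v, -, rfl⟩ := mem_image.1 hx
  obtain ⟨u, -, hu⟩ := exists_mem_eq_inf' (insert_nonempty v _) m
  exact mem_image.2 ⟨u, mem_univ u, hu.symm⟩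

theorem antitone_image_of_step {G : ℕ → SimpleGraph V} {m : ℕ → V → α}
    (hm : ∀ t, m (t + 1) = step (G t) (m t)) : Antitone fun t => univ.image (m t) :=
  antitone_nat_of_succ_le fun t => hm t ▸ image_step_subset (G t) (m t)

end Step

theorem Finset.exists_card_filter_lt_eq {β : Type*} [LinearOrder β] (s : Finset β) {i : ℕ}
    (hi : i < #s) : ∃ x ∈ s, #{y ∈ s | y < x} = i := by
  set e := s.orderEmbOfFin rfl
  refine ⟨e ⟨i, hi⟩, s.orderEmbOfFin_mem rfl _, ?_⟩
  have : {y ∈ s | y < e ⟨i, hi⟩} = (Iio ⟨i, hi⟩).map e.toEmbedding := by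
    ext y
    rw [mem_filter, ← mem_coe, ← range_orderEmbOfFin s rfl, mem_map]
    constructor
    · rintro ⟨⟨j, rfl⟩, hj⟩
      exact ⟨j, mem_Iio.2 (e.lt_iff_lt.1 hj), rfl⟩
    · rintro ⟨j, hj, rfl⟩
      exact ⟨⟨j, rfl⟩, e.lt_iff_lt.2 (mem_Iio.1 hj)⟩
  rw [this, card_map, Fin.card_Iio]

theorem SimpleGraph.Reachable.exists_adj_of_mem_of_notMem {V : Type*} {G : SimpleGraph V}
    {u v : V} (h : G.Reachable u v) {S : Set V} (hu : u ∈ S) (hv : v ∉ S) :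
    ∃ x y, G.Adj x y ∧ x ∈ S ∧ y ∉ S ∧ G.Reachable u y := by
  classical
  obtain ⟨p⟩ := h
  obtain ⟨d, hd, hx, hy⟩ := p.exists_boundary_dart S hu hv
  exact ⟨d.fst, d.snd, d.adj, hx, hy,
    (p.takeUntil d.snd (p.dart_snd_mem_support_of_mem_darts hd)).reachable⟩

theorem sum_tsub_eq_sum_card_filter_le {V : Type*} [Fintype V] (k : ℕ) (f : V → ℕ) :
    ∑ v, (k - f v) = ∑ j ∈ range k, #{v | f v ≤ j} := by
  have h (v : V) : k - f v = #{j ∈ range k | f v ≤ j} := by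
    rw [show {j ∈ range k | f v ≤ j} = Ico (f v) k by ext; simp; omega, Nat.card_Ico]
  simp_rw [h]
  exact sum_card_bipartiteAbove_eq_sum_card_bipartiteBelow _

def Straddles {V ι : Type*} (c : V → ι) (f : V → ℕ) (j : ℕ) (C : ι) : Prop :=
  (∃ v, c v = C ∧ f v ≤ j) ∧ ∃ w, c w = C ∧ j < f w

open scoped Classical in
theorem add_one_le_sum_card_straddles_add_card {V ι : Type*} [Fintype ι] (c : V → ι)
    (f : V → ℕ) (k : ℕ) (hf : ∀ i ≤ k, ∃ v, f v = i) :
    k + 1 ≤ ∑ j ∈ range k, #{C | Straddles c f j C} + Fintype.card ι := by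
  set R : ι → Finset ℕ := fun C => {i ∈ range (k + 1) | ∃ v, c v = C ∧ f v = i}
  have hcover : k + 1 ≤ ∑ C, #(R C) := by
    calc k + 1 = #(range (k + 1)) := (card_range _).symm
      _ ≤ #(univ.biUnion R) := card_le_card fun i hi => by
          obtain ⟨v, hv⟩ := hf i (Nat.lt_succ_iff.1 (mem_range.1 hi))
          exact mem_biUnion.2 ⟨c v, mem_univ _, mem_filter.2 ⟨hi, v, rfl, hv⟩⟩
      _ ≤ ∑ C, #(R C) := card_biUnion_le
  -- the ranks met by `C` fill an interval `[a, b]`, and `C` straddles every `j ∈ [a, b)`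
  have hcomp (C : ι) : #(R C) ≤ #{j ∈ range k | Straddles c f j C} + 1 := by
    rcases (R C).eq_empty_or_nonempty with hR | hR
    · simp [hR]
    have ha := mem_filter.1 ((R C).min'_mem hR)
    have hb := mem_filter.1 ((R C).max'_mem hR)
    have hIcc : R C ⊆ Icc ((R C).min' hR) ((R C).max' hR) := fun i hi =>
      mem_Icc.2 ⟨(R C).min'_le i hi, (R C).le_max' i hi⟩
    have hIco : Ico ((R C).min' hR) ((R C).max' hR) ⊆ {j ∈ range k | Straddles c f j C} := by
      intro j hj
      obtain ⟨haj, hjb⟩ := mem_Ico.1 hj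
      obtain ⟨v, hv, hva⟩ := ha.2
      obtain ⟨w, hw, hwb⟩ := hb.2
      have := mem_range.1 hb.1
      exact mem_filter.2 ⟨mem_range.2 (by omega), ⟨v, hv, by omega⟩, w, hw, by omega⟩
    have h₁ := card_le_card hIcc
    have h₂ := card_le_card hIco
    rw [Nat.card_Icc] at h₁
    rw [Nat.card_Ico] at h₂
    omega
  have hswap : ∑ j ∈ range k, #{C | Straddles c f j C}
      = ∑ C, #{j ∈ range k | Straddles c f j C} :=
    (sum_card_bipartiteAbove_eq_sum_card_bipartiteBelow _).symm
  calc k + 1 ≤ ∑ C, #(R C) := hcover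
    _ ≤ ∑ C, (#{j ∈ range k | Straddles c f j C} + 1) := sum_le_sum fun C _ => hcomp C
    _ = _ := by rw [sum_add_distrib, hswap, sum_const, smul_eq_mul, mul_one, card_univ]

section Rank

variable {V α : Type*} [Fintype V] [LinearOrder α]

theorem exists_rk_eq (m : V → α) {i : ℕ} (hi : i < #(univ.image m)) : ∃ v, rk m v = i := by
  obtain ⟨x, hx, hxi⟩ := (univ.image m).exists_card_filter_lt_eq hi
  obtain ⟨v, -, rfl⟩ := mem_image.1 hx
  exact ⟨v, hxi⟩

theorem rk_le_rk_of_image_subset {m m' : V → α} (himg : univ.image m' ⊆ univ.image m)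
    {u v : V} (h : m' v ≤ m u) : rk m' v ≤ rk m u :=
  card_le_card fun x hx => by
    rw [mem_filter] at hx ⊢
    exact ⟨himg hx.1, hx.2.trans_le h⟩

theorem rk_step_le {G : SimpleGraph V} {m : V → α} {u v : V} (h : step G m v ≤ m u) :
    rk (step G m) v ≤ rk m u :=
  rk_le_rk_of_image_subset (image_step_subset G m) h

-- With `k + 1` values present, the vertices of ranks `0, …, k` contribute a fixed amount.
theorem exists_Phi_eq {k : ℕ} (m : V → α) (hm : k < #(univ.image m)) :
    ∃ r ≤ k * (Fintype.card V - (k + 1)), Phi k m = ∑ i : Fin (k + 1), (k - i) + r := by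
  classical
  choose u hu using fun i : Fin (k + 1) => exists_rk_eq m (i.2.trans_le hm)
  have hinj : Function.Injective u := fun i j h => Fin.ext (by rw [← hu i, ← hu j, h])
  set S := univ.map ⟨u, hinj⟩
  refine ⟨∑ v ∈ Sᶜ, (k - rk m v), ?_, ?_⟩
  · calc ∑ v ∈ Sᶜ, (k - rk m v) ≤ ∑ _v ∈ Sᶜ, k := sum_le_sum fun _ _ => Nat.sub_le _ _
      _ = k * (Fintype.card V - (k + 1)) := by
        rw [sum_const, card_compl, card_map, card_univ, Fintype.card_fin, smul_eq_mul, mul_comm]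
  · rw [Phi, ← sum_add_sum_compl S, sum_map]
    simp only [Function.Embedding.coeFn_mk, hu]

open scoped Classical in
theorem card_rk_le_add_card_straddles_le (G : SimpleGraph V) [Fintype G.ConnectedComponent]
    (m : V → α) (j : ℕ) :
    #{v | rk m v ≤ j} + #{C | Straddles G.connectedComponentMk (rk m) j C}
      ≤ #{v | rk (step G m) v ≤ j} := by
  have hsub : ({v | rk m v ≤ j} : Finset V) ⊆ ({v | rk (step G m) v ≤ j} : Finset V) := by
    intro v
    simp only [mem_filter, mem_univ, true_and]
    exact (rk_step_le (step_le_self G m v)).trans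
  have hsurj : Set.SurjOn G.connectedComponentMk
      ↑(({v | rk (step G m) v ≤ j} : Finset V) \ ({v | rk m v ≤ j} : Finset V))
      ↑({C | Straddles G.connectedComponentMk (rk m) j C} : Finset _) := by
    intro C hC
    obtain ⟨⟨v, rfl, hv⟩, w, hw, hjw⟩ := (mem_filter.1 hC).2
    obtain ⟨x, y, hxy, hx, hy, hvy⟩ :=
      (SimpleGraph.ConnectedComponent.eq.1 hw.symm).exists_adj_of_mem_of_notMem
        (S := {x | rk m x ≤ j}) hv (by simpa using hjw)
    refine ⟨y, ?_, (SimpleGraph.ConnectedComponent.eq.2 hvy).symm⟩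
    simp only [coe_sdiff, coe_filter, mem_univ, true_and, Set.mem_sdiff, Set.mem_ofPred_eq]
    exact ⟨(rk_step_le (step_le_of_adj G m hxy)).trans hx, hy⟩
  have h₁ := card_le_card_of_surjOn _ hsurj
  have h₂ := card_le_card hsub
  rw [card_sdiff_of_subset hsub] at h₁
  omega

theorem Phi_add_le_Phi_step {k p : ℕ} (G : SimpleGraph V)
    (hG : Nat.card G.ConnectedComponent ≤ p) (m : V → α) (hm : k < #(univ.image m)) :
    Phi k m + (k + 1 - p) ≤ Phi k (step G m) := by
  have : Fintype G.ConnectedComponent := Fintype.ofFinite _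
  rw [Nat.card_eq_fintype_card] at hG
  have hcount := add_one_le_sum_card_straddles_add_card G.connectedComponentMk (rk m) k
    fun i hi => exists_rk_eq m (by omega)
  have hlayer := sum_le_sum fun j (_ : j ∈ range k) => card_rk_le_add_card_straddles_le G m j
  rw [sum_add_distrib] at hlayer
  simp only [Phi, sum_tsub_eq_sum_card_filter_le]
  omega

theorem Phi_add_mul_le_Phi {k p : ℕ} {G : ℕ → SimpleGraph V}
    (hG : ∀ t, Nat.card (G t).ConnectedComponent ≤ p) {m : ℕ → V → α}
    (hm : ∀ t, m (t + 1) = step (G t) (m t)) (t : ℕ) (ht : k < #(univ.image (m t))) :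
    Phi k (m 0) + t * (k + 1 - p) ≤ Phi k (m t) := by
  induction t with
  | zero => simp
  | succ t ih =>
    have hmt : k < #(univ.image (m t)) :=
      ht.trans_le (card_le_card (antitone_image_of_step hm t.le_succ))
    have hstep := Phi_add_le_Phi_step (G t) (hG t) (m t) hmt
    rw [← hm t] at hstep
    have := ih hmt
    rw [add_mul, one_mul]
    omega

end Rank

theorem k_agreement_rounds_general {V α : Type*} [Fintype V]
    [LinearOrder α] (n p k : ℕ)
    (hcard : Fintype.card V ≤ n)
    (G : ℕ → SimpleGraph V)
    (hG : ∀ t, Nat.card (G t).ConnectedComponent ≤ p)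
    (m : ℕ → V → α) (hm : ∀ t, m (t + 1) = step (G t) (m t)) :
    ∀ t : ℕ, k * (n - k - 1) < t * (k + 1 - p) →
      (Finset.univ.image (m t)).card ≤ k := by
  intro t ht
  by_contra! hmt
  have hgrowth := Phi_add_mul_le_Phi hG hm t hmt
  obtain ⟨r₀, -, h₀⟩ :=
    exists_Phi_eq (m 0) (hmt.trans_le (card_le_card (antitone_image_of_step hm t.zero_le)))
  obtain ⟨r, hr, h⟩ := exists_Phi_eq (m t) hmt
  have : k * (Fintype.card V - (k + 1)) ≤ k * (n - k - 1) := Nat.mul_le_mul_left k (by omega)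
  omega

/-- On a `p`-partitioned dynamic network with at most `n`
processes, after any `t` rounds with `t(k + 1 - p) > k(n - k - 1)`, at most
`k` distinct values remain. -/
theorem k_agreement_rounds {V α : Type*} [Fintype V] [Nonempty V]
    [LinearOrder α] (n p k : ℕ) (hp : 1 ≤ p) (hpk : p ≤ k) (hnk : k + 1 ≤ n)
    (hcard : Fintype.card V ≤ n)
    (G : ℕ → SimpleGraph V)
    (hG : ∀ t, Nat.card (G t).ConnectedComponent ≤ p)
    (m : ℕ → V → α) (hm : ∀ t, m (t + 1) = step (G t) (m t)) :
    ∀ t : ℕ, k * (n - k - 1) < t * (k + 1 - p) →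
      (Finset.univ.image (m t)).card ≤ k :=
  k_agreement_rounds_general n p k hcard G hG m hm
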